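/- In a solvable SRI instance with preference lists of length at most 3 (all (1,1)-pairs and (3,3)-pairs removed, i.e., no edge is ranked first by both endpoints and no edge is ranked last by both endpoints with both endpoints having 3 neighbours), for every stable matching M and every edge uv in an egalitarian stable matching M_egal, rank(u,M(u)) + rank(v,M(v)) ≤ (4/3) · (rank(u,v) + rank(v,u)). Consequently, c(M) ≤ (4/3) · c(M_egal), where c(M) = Σ_{a matched in M} rank(a, M(a)). -/

import Mathlib

/-!
Stability of `N` forbids `u` and `v` from both preferring each other to their `N`-partners,
so for an edge `uv` of another stable matching one of the two ranks strictly drops in `N` and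
the other is at most `3`; without (1,1)-pairs this loses at most a factor `4/3` on `uv`.
Both endpoints are matched in `N` because all stable matchings match the same agents: an agent
matched in `M` but not in `M'` would start an alternating `M`/`M'` path along which every agent
strictly improves, and such a path never revisits an agent, which is impossible in a finite
graph. Pairing each agent with its partner in the second matching sums the edgewise bound.
-/

/-- An instance of the Stable Roommates problem with Incomplete (strict) lists:
a graph together with a rank function, where `rank u v` is one plus the number
of neighbours of `u` that `u` strictly prefers to `v`, and ranks of distinct
neighbours are distinct (strict preferences). -/
structure SRI (V : Type*) [Fintype V] where
  G : SimpleGraph V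
  rank : V → V → ℕ
  rank_eq : ∀ u v, G.Adj u v →
    rank u v = 1 + Set.ncard {w | G.Adj u w ∧ rank u w < rank u v}
  rank_inj : ∀ u v w, G.Adj u v → G.Adj u w → rank u v = rank u w → v = w

variable {V : Type*} [Fintype V]

/-- A matching: a symmetric partial pairing along edges of the graph. -/
structure SRI.Matching (I : SRI V) where
  M : V → Option V
  symm : ∀ u v, M u = some v → M v = some u
  adj : ∀ u v, M u = some v → I.G.Adj u v

/-- Edge `uv` blocks `N`. -/
def SRI.Blocks (I : SRI V) (N : I.Matching) (u v : V) : Prop :=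
  I.G.Adj u v ∧ N.M u ≠ some v ∧
  (N.M u = none ∨ ∃ w, N.M u = some w ∧ I.rank u v < I.rank u w) ∧
  (N.M v = none ∨ ∃ w, N.M v = some w ∧ I.rank v u < I.rank v w)

def SRI.Stable (I : SRI V) (N : I.Matching) : Prop := ∀ u v, ¬ I.Blocks N u v

/-- Cost of a matching: the sum of `rank a (M a)` over matched agents `a`. -/
def SRI.cost (I : SRI V) (N : I.Matching) : ℕ :=
  ∑ v : V, (N.M v).elim 0 (I.rank v)

/-- Every preference list has length at most `d`. -/
def SRI.MaxDeg (I : SRI V) (d : ℕ) : Prop := ∀ v, Set.ncard {w | I.G.Adj v w} ≤ d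

/-- An egalitarian stable matching minimises cost among stable matchings. -/
def SRI.Egalitarian (I : SRI V) (N : I.Matching) : Prop :=
  I.Stable N ∧ ∀ N' : I.Matching, I.Stable N' → I.cost N ≤ I.cost N'

namespace SRI

variable (I : SRI V)

lemma rank_pos {u v : V} (h : I.G.Adj u v) : 0 < I.rank u v := by
  rw [I.rank_eq u v h]; omega

lemma rank_le_of_maxDeg {d : ℕ} (hd : I.MaxDeg d) {u v : V} (h : I.G.Adj u v) :
    I.rank u v ≤ d := by
  have hsub : {w | I.G.Adj u w ∧ I.rank u w < I.rank u v} ⊆ {w | I.G.Adj u w} \ {v} :=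
    fun w ⟨hw, hlt⟩ => ⟨hw, fun hwv => (hwv ▸ hlt).false⟩
  have hle := Set.ncard_le_ncard hsub (Set.toFinite _)
  have hcard := Set.ncard_sdiff_singleton_add_one (show v ∈ {w | I.G.Adj u w} from h)
  have := hd u
  rw [I.rank_eq u v h]
  omega

lemma rank_ne_rank {u v w : V} (hv : I.G.Adj u v) (hw : I.G.Adj u w) (hvw : v ≠ w) :
    I.rank u v ≠ I.rank u w :=
  fun h => hvw (I.rank_inj u v w hv hw h)

def Prefers (N : I.Matching) (x y : V) : Prop :=
  N.M x = none ∨ ∃ w, N.M x = some w ∧ I.rank x y < I.rank x w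

variable {I}

lemma Prefers.mate_ne {N : I.Matching} {x y : V} (h : I.Prefers N x y) : N.M x ≠ some y := by
  rintro hxy
  rcases h with h | ⟨w, hw, hlt⟩
  · simp [hxy] at h
  · rw [hxy, Option.some_inj] at hw
    exact (hw ▸ hlt).false

lemma Stable.exists_mate_rank_lt {N : I.Matching} (hN : I.Stable N) {x y : V}
    (hxy : I.G.Adj x y) (hpref : I.Prefers N x y) :
    ∃ z, N.M y = some z ∧ I.rank y z < I.rank y x := by
  by_contra! h
  refine hN x y ⟨hxy, hpref.mate_ne, hpref, ?_⟩
  rcases hz : N.M y with _ | z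
  · exact Or.inl rfl
  · have hzx : z ≠ x := fun hzx => hpref.mate_ne (N.symm y x (hzx ▸ hz))
    exact Or.inr ⟨z, rfl, (h z hz).lt_of_ne
      (I.rank_ne_rank hxy.symm (N.adj y z hz) hzx.symm)⟩

lemma Stable.rank_lt_or_rank_lt {N : I.Matching} (hN : I.Stable N) {u v a b : V}
    (huv : I.G.Adj u v) (ha : N.M u = some a) (hb : N.M v = some b) (hav : a ≠ v) :
    I.rank u a < I.rank u v ∨ I.rank v b < I.rank v u := by
  have hbu : b ≠ u := fun hbu =>
    hav (Option.some_inj.mp (ha.symm.trans (N.symm v u (hbu ▸ hb))))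
  by_contra! h
  exact hN u v ⟨huv, fun h' => hav (Option.some_inj.mp (ha.symm.trans h')),
    Or.inr ⟨a, ha, h.1.lt_of_ne (I.rank_ne_rank huv (N.adj u a ha) hav.symm)⟩,
    Or.inr ⟨b, hb, h.2.lt_of_ne (I.rank_ne_rank huv.symm (N.adj v b hb) hbu.symm)⟩⟩

def alt (M M' : I.Matching) (n : ℕ) : I.Matching := if n % 2 = 0 then M else M'

lemma alt_congr (M M' : I.Matching) {m n : ℕ} (h : m % 2 = n % 2) :
    alt M M' m = alt M M' n := by
  unfold alt; rw [h]

lemma alt_eq_or_succ_eq (M M' : I.Matching) (n : ℕ) :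
    alt M M' n = M' ∨ alt M M' (n + 1) = M' := by
  rcases Nat.mod_two_eq_zero_or_one n with h | h
  · exact .inr (if_neg (by omega))
  · exact .inl (if_neg (by omega))

lemma stable_alt {M M' : I.Matching} (hM : I.Stable M) (hM' : I.Stable M') (n : ℕ) :
    I.Stable (alt M M' n) := by
  unfold SRI.alt; split_ifs <;> assumption

/-- The default `u₀` of `getD` is never used along a path built from stable matchings. -/
def altPath (M M' : I.Matching) (u₀ : V) : ℕ → V
  | 0 => u₀
  | n + 1 => ((alt M M' n).M (altPath M M' u₀ n)).getD u₀

lemma altPath_succ_of_mate {M M' : I.Matching} {u₀ z : V} {n : ℕ}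
    (h : (alt M M' n).M (altPath M M' u₀ n) = some z) : altPath M M' u₀ (n + 1) = z := by
  simp [altPath, h]

lemma altPath_step {M M' : I.Matching} (hM : I.Stable M) (hM' : I.Stable M') {u₀ : V} {n : ℕ}
    (hmate : (alt M M' n).M (altPath M M' u₀ n) = some (altPath M M' u₀ (n + 1)))
    (hpref : I.Prefers (alt M M' (n + 1)) (altPath M M' u₀ n) (altPath M M' u₀ (n + 1))) :
    (alt M M' (n + 1)).M (altPath M M' u₀ (n + 1)) = some (altPath M M' u₀ (n + 2)) ∧
      I.rank (altPath M M' u₀ (n + 1)) (altPath M M' u₀ (n + 2)) <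
        I.rank (altPath M M' u₀ (n + 1)) (altPath M M' u₀ n) := by
  obtain ⟨z, hz, hlt⟩ := (stable_alt hM hM' (n + 1)).exists_mate_rank_lt
    ((alt M M' n).adj _ _ hmate) hpref
  rw [altPath_succ_of_mate hz]
  exact ⟨hz, hlt⟩

lemma altPath_spec {M M' : I.Matching} (hM : I.Stable M) (hM' : I.Stable M') {u₀ u₁ : V}
    (hu₁ : M.M u₀ = some u₁) (hu₀ : M'.M u₀ = none) (n : ℕ) :
    (alt M M' n).M (altPath M M' u₀ n) = some (altPath M M' u₀ (n + 1)) ∧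
      I.rank (altPath M M' u₀ (n + 1)) (altPath M M' u₀ (n + 2)) <
        I.rank (altPath M M' u₀ (n + 1)) (altPath M M' u₀ n) := by
  have hinv : ∀ n, (alt M M' n).M (altPath M M' u₀ n) = some (altPath M M' u₀ (n + 1)) ∧
      I.Prefers (alt M M' (n + 1)) (altPath M M' u₀ n) (altPath M M' u₀ (n + 1)) := by
    intro n
    induction n with
    | zero =>
      have h₁ : altPath M M' u₀ 1 = u₁ := altPath_succ_of_mate hu₁
      exact ⟨h₁ ▸ hu₁, .inl hu₀⟩
    | succ n ih =>
      obtain ⟨hnext, hlt⟩ := altPath_step hM hM' ih.1 ih.2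
      refine ⟨hnext, .inr ⟨_, ?_, hlt⟩⟩
      rw [alt_congr M M' (show (n + 1 + 1) % 2 = n % 2 by omega)]
      exact (alt M M' n).symm _ _ ih.1
  exact ⟨(hinv n).1, (altPath_step hM hM' (hinv n).1 (hinv n).2).2⟩

lemma injective_of_alternating {M M' : I.Matching} {f : ℕ → V} (hstart : M'.M (f 0) = none)
    (hmate : ∀ n, (alt M M' n).M (f n) = some (f (n + 1)))
    (hrank : ∀ n, I.rank (f (n + 1)) (f (n + 2)) < I.rank (f (n + 1)) (f n)) :
    Function.Injective f := by
  have hback : ∀ n, (alt M M' n).M (f (n + 1)) = some (f n) :=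
    fun n => (alt M M' n).symm _ _ (hmate n)
  suffices h : ∀ j k, j < k → f j ≠ f k by
    intro j k hjk
    by_contra hne
    rcases Nat.lt_or_gt_of_ne hne with hlt | hlt
    exacts [h j k hlt hjk, h k j hlt hjk.symm]
  intro j
  induction j with
  | zero =>
    rintro (_ | k) hk h0
    · omega
    · rcases alt_eq_or_succ_eq M M' k with h | h
      · have := hback k
        rw [h, ← h0, hstart] at this
        simp at this
      · have := hmate (k + 1)
        rw [h, ← h0, hstart] at this
        simp at this
  | succ j ih =>
    rintro (_ | k) hjk heq
    · omega
    by_cases hpar : j % 2 = k % 2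
    · refine ih k (by omega) (Option.some_inj.mp ?_)
      rw [← hback j, heq, alt_congr M M' hpar, hback k]
    · -- the path passes through `f (j + 1) = f (k + 1)` in both directions
      have e₁ : f j = f (k + 2) := by
        have := hback j
        rw [heq, alt_congr M M' (show j % 2 = (k + 1) % 2 by omega), hmate (k + 1)] at this
        exact (Option.some_inj.mp this).symm
      have e₂ : f (j + 2) = f k := by
        have := hmate (j + 1)
        rw [heq, alt_congr M M' (show (j + 1) % 2 = k % 2 by omega), hback k] at this
        exact (Option.some_inj.mp this).symm
      have := hrank j
      rw [e₁, e₂, heq] at this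
      exact lt_asymm this (hrank k)

/-- Gusfield–Irving, Theorem 4.5.2. -/
theorem Stable.mate_ne_none {M M' : I.Matching} (hM : I.Stable M) (hM' : I.Stable M') {u : V}
    (hu : M.M u ≠ none) : M'.M u ≠ none := by
  obtain ⟨u₁, hu₁⟩ := Option.ne_none_iff_exists'.mp hu
  intro hu₀
  have hpath := altPath_spec hM hM' hu₁ hu₀
  exact not_injective_infinite_finite _
    (injective_of_alternating hu₀ (fun n => (hpath n).1) (fun n => (hpath n).2))

theorem Stable.three_mul_rank_add_le (h3 : I.MaxDeg 3)
    (h11 : ∀ u v, I.G.Adj u v → ¬ (I.rank u v = 1 ∧ I.rank v u = 1))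
    {N N' : I.Matching} (hN : I.Stable N) (hN' : I.Stable N') {u v : V}
    (huv : N'.M u = some v) :
    ∃ a b, N.M u = some a ∧ N.M v = some b ∧
      3 * (I.rank u a + I.rank v b) ≤ 4 * (I.rank u v + I.rank v u) := by
  have hvu := N'.symm u v huv
  have huv' := N'.adj u v huv
  obtain ⟨a, ha⟩ := Option.ne_none_iff_exists'.mp (hN'.mate_ne_none hN (u := u) (by simp [huv]))
  obtain ⟨b, hb⟩ := Option.ne_none_iff_exists'.mp (hN'.mate_ne_none hN (u := v) (by simp [hvu]))
  refine ⟨a, b, ha, hb, ?_⟩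
  have hua := N.adj u a ha
  have hvb := N.adj v b hb
  have := I.rank_pos huv'; have := I.rank_pos huv'.symm
  have := I.rank_pos hua; have := I.rank_pos hvb
  have := I.rank_le_of_maxDeg h3 hua; have := I.rank_le_of_maxDeg h3 hvb
  have := h11 u v huv'
  by_cases hav : a = v
  · subst hav
    obtain rfl : b = u := Option.some_inj.mp (hb.symm.trans (N.symm u a ha))
    omega
  · have := hN.rank_lt_or_rank_lt huv' ha hb hav
    omega

lemma _root_.Function.Involutive.sum_le_sum_of_add_le {ι : Type*} [Fintype ι] {σ : ι → ι}
    (hσ : Function.Involutive σ) {f g : ι → ℕ} (h : ∀ i, f i + f (σ i) ≤ g i + g (σ i)) :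
    ∑ i, f i ≤ ∑ i, g i := by
  have hsum := Finset.sum_le_sum fun i (_ : i ∈ Finset.univ) => h i
  have hf : ∑ i, f (σ i) = ∑ i, f i := Equiv.sum_comp (hσ.toPerm σ) f
  have hg : ∑ i, g (σ i) = ∑ i, g i := Equiv.sum_comp (hσ.toPerm σ) g
  rw [Finset.sum_add_distrib, Finset.sum_add_distrib, hf, hg] at hsum
  omega

def Matching.mateOrSelf (N : I.Matching) (v : V) : V := (N.M v).getD v

lemma Matching.mateOrSelf_involutive (N : I.Matching) : Function.Involutive N.mateOrSelf := by
  intro v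
  rcases hv : N.M v with _ | w
  · simp [mateOrSelf, hv]
  · simp [mateOrSelf, hv, N.symm v w hv]

theorem Stable.three_mul_cost_le (h3 : I.MaxDeg 3)
    (h11 : ∀ u v, I.G.Adj u v → ¬ (I.rank u v = 1 ∧ I.rank v u = 1))
    {N N' : I.Matching} (hN : I.Stable N) (hN' : I.Stable N') :
    3 * I.cost N ≤ 4 * I.cost N' := by
  unfold SRI.cost
  rw [Finset.mul_sum, Finset.mul_sum]
  refine N'.mateOrSelf_involutive.sum_le_sum_of_add_le fun v => ?_
  rcases hv : N'.M v with _ | w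
  · have hNv : N.M v = none := by
      by_contra h
      exact hN.mate_ne_none hN' h hv
    simp [Matching.mateOrSelf, hv, hNv]
  · obtain ⟨a, b, ha, hb, hle⟩ := hN.three_mul_rank_add_le h3 h11 hN' hv
    simp only [Matching.mateOrSelf, hv, ha, hb, N'.symm v w hv, Option.getD_some,
      Option.elim_some]
    omega

end SRI

theorem stmt4_general (I : SRI V) (h3 : I.MaxDeg 3)
    (h11 : ∀ u v, I.G.Adj u v → ¬ (I.rank u v = 1 ∧ I.rank v u = 1))
    (N Ne : I.Matching) (hN : I.Stable N) (hNe : I.Egalitarian Ne) :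
    (∀ u v, Ne.M u = some v →
      ∃ a b, N.M u = some a ∧ N.M v = some b ∧
        3 * (I.rank u a + I.rank v b) ≤ 4 * (I.rank u v + I.rank v u)) ∧
    3 * I.cost N ≤ 4 * I.cost Ne :=
  ⟨fun _ _ huv => hN.three_mul_rank_add_le h3 h11 hNe.1 huv, hN.three_mul_cost_le h3 h11 hNe.1⟩

/-- 4/3-approximation for 3-SRI without (1,1)- and (3,3)-pairs: edgewise bound
and the consequent global bound `c(M) ≤ (4/3) c(M_egal)`. -/
theorem stmt4 (I : SRI V) (h3 : I.MaxDeg 3)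
    (h11 : ∀ u v, I.G.Adj u v → ¬ (I.rank u v = 1 ∧ I.rank v u = 1))
    (h33 : ∀ u v, I.G.Adj u v → ¬ (I.rank u v = 3 ∧ I.rank v u = 3))
    (N Ne : I.Matching) (hN : I.Stable N) (hNe : I.Egalitarian Ne) :
    (∀ u v, Ne.M u = some v →
      ∃ a b, N.M u = some a ∧ N.M v = some b ∧
        3 * (I.rank u a + I.rank v b) ≤ 4 * (I.rank u v + I.rank v u)) ∧
    3 * I.cost N ≤ 4 * I.cost Ne :=
  stmt4_general I h3 h11 N Ne hN hNe
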